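/- Let g ∈ SL(2,ℂ) have Iwasawa decomposition g = k'·n(z')·a(t') with k' = [[α,β],[−conj(β),conj(α)]] ∈ SU(2), z' ∈ ℂ, t' ∈ ℝ, and suppose d(g,e) ≤ C₀ for a fixed C₀ (so |z'|, |t'| are bounded by a constant depending on C₀). Fix T large (depending on C₀). There exist constants C, D > 0 depending only on C₀ and T such that: if 0 < δ < D and for every t ∈ [t'−1, t'+1] the point obtained by the Möbius-type action of k' on (z', e^{t}) ∈ ℍ³ has first coordinate of modulus at most δ and second coordinate in [e^{−T}, e^{T}], then |α·β| ≤ C·δ, hence either |α| ≤ C'δ or |β| ≤ C'δ (i.e., k' is within O(δ) of the union M ∪ w₀M), and additionally |z'| ≤ C''δ. -/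

import Mathlib

/-!
The numerator of `act1` is `P - conj α * β * e^{2t}`, where
`P = act1NumConst α β z' = (α z' + β)(α - β conj z')` does not depend on `t`. The height bound
`act2 ≥ e^{-T}` bounds the denominator by `e^{T+t}`, so `‖P - conj α * β * e^{2t}‖ ≤ δ e^{T+t}`
along the segment. Between `t' - 1` and `t' + 1` the term `e^{2t}` grows by `e^4` but the bound
only by `e^2`, which forces `‖α β‖ = O(δ)` and then `‖P‖ = O(δ)`. Finally `‖α‖² + ‖β‖² = 1` gives
`|‖α‖² - ‖β‖²| ≥ 1 - 2‖α β‖`, and `P = α² z' - β² conj z' + α β (1 - |z'|²)` then yields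
`‖z'‖ = O(δ)`.
-/

noncomputable section

/-- First coordinate of the action of `k' = [[α,β],[−conj β, conj α]]` on the point
`(z', e^t) ∈ ℍ³`. -/
def act1 (α β z' : ℂ) (t : ℝ) : ℂ :=
  ((α * z' + β) * star (-(star β) * z' + star α)
      - star α * β * (Real.exp (2*t) : ℝ)) /
    ((Complex.normSq (-(star β) * z' + star α)
      + Complex.normSq β * Real.exp (2*t) : ℝ) : ℂ)

/-- Second coordinate (the height) of the action of `k'` on `(z', e^t) ∈ ℍ³`. -/
def act2 (α β z' : ℂ) (t : ℝ) : ℝ :=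
  Real.exp t /
    (Complex.normSq (-(star β) * z' + star α) + Complex.normSq β * Real.exp (2*t))

open Real

def act1NumConst (α β z : ℂ) : ℂ := α ^ 2 * z - β ^ 2 * star z + α * β * (1 - z * star z)

lemma norm_act1NumConst_sub_le {α β z : ℂ} {t δ T : ℝ} (hδ : 0 ≤ δ)
    (h₁ : ‖act1 α β z t‖ ≤ δ) (h₂ : exp (-T) ≤ act2 α β z t) :
    ‖act1NumConst α β z - star α * β * (exp (2 * t) : ℂ)‖ ≤ δ * exp T * exp t := by
  set Q := Complex.normSq (-(star β) * z + star α) + Complex.normSq β * exp (2 * t) with hQ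
  have hnum : (α * z + β) * star (-(star β) * z + star α)
        - star α * β * ((exp (2 * t) : ℝ) : ℂ)
      = act1NumConst α β z - star α * β * (exp (2 * t) : ℂ) := by
    simp only [act1NumConst, star_add, star_mul', star_neg, star_star, Complex.ofReal_exp]
    ring
  rw [act1, hnum, norm_div, Complex.norm_real, norm_eq_abs, ← hQ] at h₁
  rw [act2, ← hQ] at h₂
  have hQ0 : 0 ≤ Q := add_nonneg (Complex.normSq_nonneg _)
    (mul_nonneg (Complex.normSq_nonneg _) (exp_pos _).le)
  have hQpos : 0 < Q := by
    refine hQ0.lt_of_ne fun hQ0 => ?_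
    rw [← hQ0, div_zero] at h₂
    exact (exp_pos _).not_ge h₂
  rw [abs_of_pos hQpos, div_le_iff₀ hQpos] at h₁
  have hQle : Q ≤ exp T * exp t := by
    rw [le_div_iff₀ hQpos, exp_neg, inv_mul_le_iff₀ (exp_pos T)] at h₂
    linarith
  calc _ ≤ δ * Q := h₁
    _ ≤ δ * (exp T * exp t) := by gcongr
    _ = δ * exp T * exp t := by ring

lemma norm_le_of_norm_sub_exp_le {c x : ℂ} {s K : ℝ}
    (h₀ : ‖c - x * (exp (2 * s) : ℂ)‖ ≤ K * exp s)
    (h₂ : ‖c - x * (exp (2 * (s + 2)) : ℂ)‖ ≤ K * exp (s + 2)) :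
    ‖x‖ * exp s ≤ K ∧ ‖c‖ ≤ 2 * K * exp s := by
  set u := exp s with hu
  set q := exp 2 with hq
  have hu0 : 0 < u := exp_pos s
  have hq3 : 3 ≤ q := by linarith [add_one_le_exp (2 : ℝ)]
  have e₀ : exp (2 * s) = u ^ 2 := by rw [hu, ← exp_nat_mul]; ring_nf
  have e₂ : exp (2 * (s + 2)) = q ^ 2 * u ^ 2 := by
    rw [hu, hq, ← exp_nat_mul, ← exp_nat_mul, ← exp_add]; ring_nf
  have e₁ : exp (s + 2) = q * u := by rw [exp_add, mul_comm]
  rw [e₀] at h₀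
  rw [e₂, e₁] at h₂
  have hdiff : ‖x‖ * (u ^ 2 * (q ^ 2 - 1)) ≤ K * u + K * (q * u) := by
    have hid : x * ((u ^ 2 * (q ^ 2 - 1) : ℝ) : ℂ)
        = (c - x * ((u ^ 2 : ℝ) : ℂ)) - (c - x * ((q ^ 2 * u ^ 2 : ℝ) : ℂ)) := by
      push_cast; ring
    have hpos : 0 ≤ u ^ 2 * (q ^ 2 - 1) := mul_nonneg (sq_nonneg u) (by nlinarith)
    calc ‖x‖ * (u ^ 2 * (q ^ 2 - 1)) = ‖x * ((u ^ 2 * (q ^ 2 - 1) : ℝ) : ℂ)‖ := by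
          rw [norm_mul, Complex.norm_real, norm_eq_abs, abs_of_nonneg hpos]
      _ ≤ _ := by rw [hid]; exact (norm_sub_le _ _).trans (add_le_add h₀ h₂)
  have hx : ‖x‖ * u ≤ K := by
    have : (‖x‖ * u * (q - 1)) * (u * (q + 1)) ≤ K * (u * (q + 1)) := by nlinarith
    have := le_of_mul_le_mul_right this (by positivity)
    nlinarith [mul_nonneg (mul_nonneg (norm_nonneg x) hu0.le) (by linarith : (0 : ℝ) ≤ q - 2)]
  refine ⟨hx, ?_⟩
  calc ‖c‖ ≤ ‖c - x * ((u ^ 2 : ℝ) : ℂ)‖ + ‖x * ((u ^ 2 : ℝ) : ℂ)‖ :=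
        norm_le_norm_sub_add _ _
    _ ≤ K * u + (‖x‖ * u) * u := by
        rw [norm_mul, Complex.norm_real, norm_eq_abs, abs_of_nonneg (by positivity)]
        nlinarith
    _ ≤ 2 * K * u := by nlinarith

lemma norm_le_two_mul_norm_mul_or {α β : ℂ} (h : Complex.normSq α + Complex.normSq β = 1) :
    ‖α‖ ≤ 2 * ‖α * β‖ ∨ ‖β‖ ≤ 2 * ‖α * β‖ := by
  rw [← Complex.sq_norm, ← Complex.sq_norm] at h
  rw [norm_mul]
  have := norm_nonneg α
  have := norm_nonneg β
  rcases le_total ‖α‖ ‖β‖ with hab | hab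
  · left; nlinarith
  · right; nlinarith

lemma norm_le_norm_act1NumConst_add {α β z : ℂ} (h : Complex.normSq α + Complex.normSq β = 1) :
    ‖z‖ ≤ ‖act1NumConst α β z‖ + 2 * ‖α * β‖ * (1 + ‖z‖ ^ 2) := by
  rw [← Complex.sq_norm, ← Complex.sq_norm] at h
  set a := ‖α‖
  set b := ‖β‖
  set r := ‖z‖
  have ha := norm_nonneg α
  have hb := norm_nonneg β
  have hr := norm_nonneg z
  have hab : ‖α * β‖ = a * b := norm_mul α β
  have hmixed : ‖α * β * (1 - z * star z)‖ ≤ a * b * (1 + r ^ 2) := by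
    rw [norm_mul, hab]
    gcongr
    calc ‖1 - z * star z‖ ≤ ‖(1 : ℂ)‖ + ‖z * star z‖ := norm_sub_le _ _
      _ = 1 + r ^ 2 := by rw [norm_one, norm_mul, norm_star, sq]
  have hα : ‖α ^ 2 * z‖ = a ^ 2 * r := by rw [norm_mul, norm_pow]
  have hβ : ‖β ^ 2 * star z‖ = b ^ 2 * r := by rw [norm_mul, norm_pow, norm_star]
  -- `|a² - b²| ≥ (a² - b²)² = 1 - 4a²b² ≥ 1 - 2ab`
  have hgap : (1 - 2 * (a * b)) * r ≤ ‖α ^ 2 * z - β ^ 2 * star z‖ := by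
    have h1 := norm_sub_norm_le (α ^ 2 * z) (β ^ 2 * star z)
    have h2 := norm_sub_norm_le (β ^ 2 * star z) (α ^ 2 * z)
    rw [norm_sub_rev] at h2
    rw [hα, hβ] at h1 h2
    have hab2 : 2 * (a * b) ≤ 1 := by nlinarith [sq_nonneg (a - b)]
    rcases le_total (b ^ 2) (a ^ 2) with hle | hle
    · have : 1 - 2 * (a * b) ≤ a ^ 2 - b ^ 2 := by
        nlinarith [mul_nonneg (sub_nonneg.2 hle) (sq_nonneg b), mul_nonneg ha hb]
      nlinarith
    · have : 1 - 2 * (a * b) ≤ b ^ 2 - a ^ 2 := by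
        nlinarith [mul_nonneg (sub_nonneg.2 hle) (sq_nonneg a), mul_nonneg ha hb]
      nlinarith
  have hsplit : ‖α ^ 2 * z - β ^ 2 * star z‖
      ≤ ‖act1NumConst α β z‖ + ‖α * β * (1 - z * star z)‖ := by
    rw [show α ^ 2 * z - β ^ 2 * star z
        = act1NumConst α β z - α * β * (1 - z * star z) by rw [act1NumConst]; ring]
    exact norm_sub_le _ _
  rw [hab]
  nlinarith [mul_nonneg (mul_nonneg ha hb) (sq_nonneg (r - 1))]

theorem stmt_18_general (C₀ : ℝ) :
    ∃ T₀ > 0, ∀ T ≥ T₀, ∃ C > 0, ∃ D > 0, ∀ δ : ℝ, ∀ α β z' : ℂ, ∀ t' : ℝ,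
      0 < δ → δ < D → Complex.normSq α + Complex.normSq β = 1 →
      ‖z'‖ ≤ C₀ → |t'| ≤ C₀ →
      (∀ t ∈ Set.Icc (t' - 1) (t' + 1),
        ‖act1 α β z' t‖ ≤ δ ∧
        act2 α β z' t ∈ Set.Icc (Real.exp (-T)) (Real.exp T)) →
      ‖α * β‖ ≤ C * δ ∧
      (‖α‖ ≤ C * δ ∨ ‖β‖ ≤ C * δ) ∧
      ‖z'‖ ≤ C * δ := by
  refine ⟨1, one_pos, fun T _ =>
    ⟨4 * (1 + C₀ ^ 2) * exp (T + C₀ + 1), by positivity, 1, one_pos, ?_⟩⟩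
  intro δ α β z' t' hδ _ hunit hz ht' htube
  obtain ⟨ht'₁, ht'₂⟩ := abs_le.mp ht'
  set E := exp (T + C₀ + 1)
  have hnum : ∀ t ∈ Set.Icc (t' - 1) (t' + 1),
      ‖act1NumConst α β z' - star α * β * (exp (2 * t) : ℂ)‖ ≤ δ * exp T * exp t :=
    fun t ht => norm_act1NumConst_sub_le hδ.le (htube t ht).1 (htube t ht).2.1
  have hright := hnum (t' + 1) ⟨by linarith, le_rfl⟩
  rw [show t' + 1 = t' - 1 + 2 by ring] at hright
  obtain ⟨hx, hc⟩ := norm_le_of_norm_sub_exp_le (hnum (t' - 1) ⟨le_rfl, by linarith⟩) hright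
  rw [norm_mul, norm_star, ← norm_mul] at hx
  have hαβ : ‖α * β‖ ≤ E * δ := by
    have h₁ : ‖α * β‖ ≤ δ * exp T * exp (1 - t') := by
      rw [show exp (1 - t') = (exp (t' - 1))⁻¹ by rw [← exp_neg]; ring_nf,
        ← div_eq_mul_inv, le_div_iff₀ (exp_pos _)]
      exact hx
    have h₂ : exp T * exp (1 - t') ≤ E := by rw [← exp_add]; exact exp_le_exp.2 (by linarith)
    nlinarith
  have hP : ‖act1NumConst α β z'‖ ≤ 2 * E * δ := by
    have : exp T * exp (t' - 1) ≤ E := by rw [← exp_add]; exact exp_le_exp.2 (by linarith)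
    nlinarith
  have hz2 : ‖z'‖ ^ 2 ≤ C₀ ^ 2 := pow_le_pow_left₀ (norm_nonneg _) hz 2
  have hzδ := norm_le_norm_act1NumConst_add (z := z') hunit
  have hE : 0 < E * δ := by positivity
  refine ⟨by nlinarith, ?_, by nlinarith⟩
  rcases norm_le_two_mul_norm_mul_or hunit with h | h
  · exact Or.inl (by nlinarith)
  · exact Or.inr (by nlinarith)

/-- If the geodesic segment `{k'·(z', e^t) : t ∈ [t'−1, t'+1]}` lies in the tube of
radius `δ` and height range `[e^{−T}, e^{T}]` around the vertical geodesic, then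
`|αβ| ≤ Cδ`, hence `|α| ≤ Cδ` or `|β| ≤ Cδ`, and moreover `|z'| ≤ Cδ`. -/
theorem stmt_18 (C₀ : ℝ) (hC₀ : 0 < C₀) :
    ∃ T₀ > 0, ∀ T ≥ T₀, ∃ C > 0, ∃ D > 0, ∀ δ : ℝ, ∀ α β z' : ℂ, ∀ t' : ℝ,
      0 < δ → δ < D → Complex.normSq α + Complex.normSq β = 1 →
      ‖z'‖ ≤ C₀ → |t'| ≤ C₀ →
      (∀ t ∈ Set.Icc (t' - 1) (t' + 1),
        ‖act1 α β z' t‖ ≤ δ ∧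
        act2 α β z' t ∈ Set.Icc (Real.exp (-T)) (Real.exp T)) →
      ‖α * β‖ ≤ C * δ ∧
      (‖α‖ ≤ C * δ ∨ ‖β‖ ≤ C * δ) ∧
      ‖z'‖ ≤ C * δ :=
  stmt_18_general C₀
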